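/- Let c be an equilibrium under the difference-seeking utility U_# on a finite simple graph G with minimum degree δ, and let u, v be vertices with c(u) ≠ c(v) and U_#(c,u) = U_#(c,v) = r. Then either at least δ − r neighbors of u carry type c(v), or at least δ − r neighbors of v carry type c(u). -/

import Mathlib

open SimpleGraph Finset

/-- The coloring obtained from `c` by swapping the colors (agents) at `u` and `v`. -/
def swapColoring {V : Type*} [DecidableEq V] {t : ℕ} (c : V → Fin t) (u v : V) : V → Fin t :=
  fun w => if w = u then c v else if w = v then c u else c w

/-- The binary utility `U_b`: 1 if some neighbor has a different type, 0 otherwise. -/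
def Ub {V : Type*} [Fintype V] (G : SimpleGraph V) [DecidableRel G.Adj]
    {t : ℕ} (c : V → Fin t) (v : V) : ℕ :=
  if ∃ w ∈ G.neighborFinset v, c w ≠ c v then 1 else 0

/-- The difference-seeking utility `U_#`: the number of neighbors of a different type. -/
def Usharp {V : Type*} [Fintype V] (G : SimpleGraph V) [DecidableRel G.Adj]
    {t : ℕ} (c : V → Fin t) (v : V) : ℕ :=
  ((G.neighborFinset v).filter fun w => c w ≠ c v).card

/-- `T_c(v)`: the set of types present in the neighborhood of `v`. -/
def typesIn {V : Type*} [Fintype V] (G : SimpleGraph V) [DecidableRel G.Adj]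
    {t : ℕ} (c : V → Fin t) (v : V) : Finset (Fin t) :=
  (G.neighborFinset v).image c

/-- The variety-seeking utility `U_τ`: the number of types other than `c v` in the
neighborhood of `v`. -/
def Utau {V : Type*} [Fintype V] (G : SimpleGraph V) [DecidableRel G.Adj]
    {t : ℕ} (c : V → Fin t) (v : V) : ℕ :=
  ((typesIn G c v).erase (c v)).card

/-- The swap of `u` and `v` is improving under utility `U`. -/
def ImprovingSwap {V : Type*} [DecidableEq V] {t : ℕ}
    (U : (V → Fin t) → V → ℕ) (c : V → Fin t) (u v : V) : Prop :=
  U c u < U (swapColoring c u v) v ∧ U c v < U (swapColoring c u v) u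

/-- `c` is an equilibrium under the utility `U`: no improving swap exists. -/
def Equilibrium {V : Type*} [DecidableEq V] {t : ℕ}
    (U : (V → Fin t) → V → ℕ) (c : V → Fin t) : Prop :=
  ∀ u v : V, c u ≠ c v → ¬ ImprovingSwap U c u v

/-- The number of monochromatic edges of `c`. -/
def monoCount {V : Type*} [Fintype V] [DecidableEq V] (G : SimpleGraph V) [DecidableRel G.Adj]
    {t : ℕ} (c : V → Fin t) : ℕ :=
  (G.edgeFinset.filter fun e => (e.map c).IsDiag).card

/-- The number of colorful edges of `c`. -/
def ceCount {V : Type*} [Fintype V] [DecidableEq V] (G : SimpleGraph V) [DecidableRel G.Adj]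
    {t : ℕ} (c : V → Fin t) : ℕ :=
  (G.edgeFinset.filter fun e => ¬ (e.map c).IsDiag).card

/-- The cycle graph on `ZMod n`: `i` adjacent to `i + 1` and `i - 1`. -/
def cycleZMod (n : ℕ) : SimpleGraph (ZMod n) := SimpleGraph.circulantGraph {1}

instance (n : ℕ) : DecidableRel (cycleZMod n).Adj := fun a b =>
  decidable_of_iff (a ≠ b ∧ (a - b = 1 ∨ b - a = 1)) (by simp [cycleZMod])

instance {α β : Type*} (G : SimpleGraph α) (H : SimpleGraph β)
    [DecidableRel G.Adj] [DecidableRel H.Adj] [DecidableEq α] [DecidableEq β] :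
    DecidableRel (G □ H).Adj := fun x y =>
  decidable_of_iff (G.Adj x.1 y.1 ∧ x.2 = y.2 ∨ H.Adj x.2 y.2 ∧ x.1 = y.1)
    (SimpleGraph.boxProd_adj).symm

/-! Since the swap of `u` and `v` is not improving, one of them, say `v`, would get utility at
most `r` after it. There `v` carries type `c u` and all its other neighbors keep their types, so
at most `r` neighbors of `v` have a type other than `c u`; the remaining at least `δ - r` have
type `c u`. -/

section

variable {V : Type*} [DecidableEq V] {t : ℕ}

theorem swapColoring_comm (c : V → Fin t) (u v : V) :
    swapColoring c u v = swapColoring c v u := by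
  funext w
  unfold swapColoring
  split_ifs <;> simp_all

theorem swapColoring_apply_right (c : V → Fin t) {u v : V} (huv : u ≠ v) :
    swapColoring c u v v = c u := by
  simp [swapColoring, huv.symm]

theorem Equilibrium.swap_le_or {U : (V → Fin t) → V → ℕ} {c : V → Fin t} (heq : Equilibrium U c)
    {u v : V} (huv : c u ≠ c v) :
    U (swapColoring c u v) v ≤ U c u ∨ U (swapColoring c u v) u ≤ U c v := by
  have := heq u v huv
  unfold ImprovingSwap at this
  omega

section Usharp

variable [Fintype V] (G : SimpleGraph V) [DecidableRel G.Adj]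

theorem card_neighbor_ne_le_Usharp_swap (c : V → Fin t) {u v : V} (huv : u ≠ v) :
    ((G.neighborFinset v).filter fun w => c w ≠ c u).card ≤
      Usharp G (swapColoring c u v) v := by
  refine card_le_card fun w hw => ?_
  simp only [mem_filter, mem_neighborFinset] at hw ⊢
  refine ⟨hw.1, ?_⟩
  rw [swapColoring_apply_right c huv]
  by_cases hwu : w = u
  · exact absurd (hwu ▸ rfl) hw.2
  · simpa [swapColoring, hwu, hw.1.ne'] using hw.2

theorem minDegree_sub_Usharp_swap_le (c : V → Fin t) {u v : V} (huv : u ≠ v) :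
    G.minDegree - Usharp G (swapColoring c u v) v ≤
      ((G.neighborFinset v).filter fun w => c w = c u).card := by
  have hdeg : G.minDegree ≤ (G.neighborFinset v).card :=
    (card_neighborFinset_eq_degree G v).symm ▸ G.minDegree_le_degree v
  have hsplit : ((G.neighborFinset v).filter fun w => c w = c u).card +
      ((G.neighborFinset v).filter fun w => c w ≠ c u).card = (G.neighborFinset v).card :=
    card_filter_add_card_filter_not _
  have hne := card_neighbor_ne_le_Usharp_swap G c huv
  omega

end Usharp

end

theorem stmt1_general {V : Type*} [Fintype V] [DecidableEq V] (G : SimpleGraph V) [DecidableRel G.Adj]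
    {t : ℕ} (c : V → Fin t) (heq : Equilibrium (Usharp G) c)
    (u v : V) (huv : c u ≠ c v) (r : ℕ)
    (hu : Usharp G c u = r) (hv : Usharp G c v = r) :
    G.minDegree - r ≤ ((G.neighborFinset u).filter fun w => c w = c v).card ∨
      G.minDegree - r ≤ ((G.neighborFinset v).filter fun w => c w = c u).card := by
  have hne : u ≠ v := fun h => huv (congrArg c h)
  rcases heq.swap_le_or huv with hv_swap | hu_swap
  · right
    calc G.minDegree - r ≤ G.minDegree - Usharp G (swapColoring c u v) v := by omega
      _ ≤ _ := minDegree_sub_Usharp_swap_le G c hne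
  · left
    rw [swapColoring_comm] at hu_swap
    calc G.minDegree - r ≤ G.minDegree - Usharp G (swapColoring c v u) u := by omega
      _ ≤ _ := minDegree_sub_Usharp_swap_le G c hne.symm

theorem stmt1 {V : Type*} [Fintype V] [DecidableEq V] (G : SimpleGraph V) [DecidableRel G.Adj]
    {t : ℕ} (ht : 2 ≤ t) (c : V → Fin t) (heq : Equilibrium (Usharp G) c)
    (u v : V) (huv : c u ≠ c v) (r : ℕ)
    (hu : Usharp G c u = r) (hv : Usharp G c v = r) :
    G.minDegree - r ≤ ((G.neighborFinset u).filter fun w => c w = c v).card ∨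
      G.minDegree - r ≤ ((G.neighborFinset v).filter fun w => c w = c u).card :=
  stmt1_general G c heq u v huv r hu hv
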